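/- The rational function 1/(xy) ∈ F(x,y) is not (σ_x,σ_y)-summable in F(x,y): there exist no g, h ∈ F(x,y) with 1/(xy) = σ_x(g) − g + σ_y(h) − h. -/

import Mathlib

/-- `F(x,y)`, realized as `RatFunc (RatFunc F)` (the inner variable is `x`, the outer is `y`). -/
noncomputable abbrev RatFunc2 (F : Type*) [Field F] : Type _ := RatFunc (RatFunc F)

/-- The element `x` of `F(x,y)`. -/
noncomputable abbrev RatFunc2.x (F : Type*) [Field F] : RatFunc2 F := RatFunc.C RatFunc.X

/-- The element `y` of `F(x,y)`. -/
noncomputable abbrev RatFunc2.y (F : Type*) [Field F] : RatFunc2 F := RatFunc.X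

/-!
For `f ∈ K(y)` let `R(f) = ∑_{n ∈ ℤ} res_{y=n} f` be the sum of its residues at the integers.
Telescoping gives `R(f(y+1) - f) = 0`, and `R` commutes with any automorphism acting only on the
coefficients `K`. With `K = F(x)`, applying `R` to `1/(xy) = σ_x g - g + σ_y h - h` yields
`1/x = S(x+1) - S(x)` for `S = R(g) ∈ F(x)`; the integer residue sum over `F` then turns this
into `1 = 0`.
-/

open scoped Polynomial PowerSeries LaurentSeries nonZeroDivisors

namespace HahnSeries

variable {Γ R S : Type*} [AddCommMonoid Γ] [PartialOrder Γ] [IsOrderedCancelAddMonoid Γ]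
  [Semiring R] [Semiring S]

def mapRingHom (f : R →+* S) : R⟦Γ⟧ →+* S⟦Γ⟧ where
  toFun x := x.map f
  map_one' := HahnSeries.map_one f.toMonoidWithZeroHom
  map_mul' _ _ := HahnSeries.map_mul (f : R →ₙ+* S)
  map_zero' := HahnSeries.map_zero (f : ZeroHom R S)
  map_add' _ _ := HahnSeries.map_add (f : R →+ S)

@[simp]
theorem mapRingHom_apply (f : R →+* S) (x : R⟦Γ⟧) : mapRingHom f x = x.map f := rfl

end HahnSeries

namespace RatFunc

variable {K : Type*} [Field K]

theorem ringHom_ext {L : Type*} [Semiring L] {φ ψ : RatFunc K →+* L}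
    (hC : ∀ a, φ (C a) = ψ (C a)) (hX : φ X = ψ X) : φ = ψ := by
  refine IsLocalization.ringHom_ext K[X]⁰ (Polynomial.ringHom_ext (fun a => ?_) ?_)
  · simpa [algebraMap_C] using hC a
  · simpa [algebraMap_X] using hX

theorem algHom_ext {L : Type*} [Semiring L] [Algebra K L] {φ ψ : RatFunc K →ₐ[K] L}
    (hX : φ X = ψ X) : φ = ψ := by
  refine IsLocalization.algHom_ext K[X]⁰ (Polynomial.algHom_ext ?_)
  change φ (algebraMap _ _ Polynomial.X) = ψ (algebraMap _ _ Polynomial.X)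
  rwa [algebraMap_X]

noncomputable def shift (c : K) : RatFunc K →ₐ[K] RatFunc K :=
  mapAlgHom (Polynomial.taylorAlgHom c) <|
    nonZeroDivisors_le_comap_nonZeroDivisors_of_injective _ (Polynomial.taylorEquiv c).injective

theorem shift_div (c : K) (p q : K[X]) :
    shift c (algebraMap _ _ p / algebraMap _ _ q) =
      algebraMap _ _ (Polynomial.taylor c p) / algebraMap _ _ (Polynomial.taylor c q) := by
  rw [shift, coe_mapAlgHom_eq_coe_map, map_apply_div]
  rfl

@[simp]
theorem shift_X (c : K) : shift c X = X + C c := by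
  simpa [← algebraMap_X, ← algebraMap_C, Polynomial.taylor_X] using shift_div c Polynomial.X 1

@[simp]
theorem shift_C (c a : K) : shift c (C a) = C a := by
  rw [← algebraMap_eq_C, AlgHom.commutes]

theorem shift_shift (c d : K) (f : RatFunc K) : shift c (shift d f) = shift (d + c) f := by
  have : (shift c).comp (shift d) = shift (d + c) := algHom_ext (by simp; ring)
  exact AlgHom.congr_fun this f

@[simp]
theorem shift_zero (f : RatFunc K) : shift 0 f = f := by
  have : shift (0 : K) = AlgHom.id K _ := algHom_ext (by simp)
  exact AlgHom.congr_fun this f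

theorem algHom_apply_C_eq_C_shift (φ : RatFunc (RatFunc K) →ₐ[K] RatFunc (RatFunc K)) {c : K}
    (h : φ (C X) = C (X + C c)) (f : RatFunc K) : φ (C f) = C (shift c f) := by
  let ι := IsScalarTower.toAlgHom K (RatFunc K) (RatFunc (RatFunc K))
  have : φ.comp ι = ι.comp (shift c) := algHom_ext (by simp [ι, h])
  exact AlgHom.congr_fun this f

noncomputable def residue (a : K) : RatFunc K →+ K :=
  (HahnSeries.coeff.addMonoidHom (-1)).comp
    ((algebraMap (RatFunc K) K⸨X⸩).comp (shift a : RatFunc K →+* RatFunc K)).toAddMonoidHom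

theorem residue_apply (a : K) (f : RatFunc K) :
    residue a f = ((shift a f : RatFunc K) : K⸨X⸩).coeff (-1) := rfl

theorem residue_shift (a c : K) (f : RatFunc K) : residue a (shift c f) = residue (c + a) f := by
  rw [residue_apply, shift_shift, residue_apply]

theorem coe_algebraMap_polynomial (p : K[X]) :
    ((algebraMap _ _ p : RatFunc K) : K⸨X⸩) = ((p : K⟦X⟧) : K⸨X⸩) := by
  rw [← IsScalarTower.algebraMap_apply, Polynomial.algebraMap_hahnSeries_apply]

theorem coe_C (a : K) : ((C a : RatFunc K) : K⸨X⸩) = HahnSeries.C a := by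
  rw [← algebraMap_C, coe_algebraMap_polynomial, Polynomial.coe_C, HahnSeries.ofPowerSeries_C]

theorem coe_div_eq_coe_powerSeries {p q : K[X]} (hq : q.coeff 0 ≠ 0) :
    ((algebraMap _ _ p / algebraMap _ _ q : RatFunc K) : K⸨X⸩) =
      ((p * (q : K⟦X⟧)⁻¹ : K⟦X⟧) : K⸨X⸩) := by
  have hq' : ((algebraMap _ _ q : RatFunc K) : K⸨X⸩) ≠ 0 := by
    rw [← IsScalarTower.algebraMap_apply]
    exact (map_ne_zero_iff _ (Polynomial.algebraMap_hahnSeries_injective ℤ)).mpr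
      fun h => hq (by simp [h])
  rw [map_div₀, div_eq_iff hq', coe_algebraMap_polynomial, coe_algebraMap_polynomial,
    ← PowerSeries.coe_mul, mul_assoc,
    PowerSeries.inv_mul_cancel _ (by rwa [Polynomial.constantCoeff_coe]), mul_one]

theorem residue_div_eq_zero {a : K} {p q : K[X]} (hq : q.eval a ≠ 0) :
    residue a (algebraMap _ _ p / algebraMap _ _ q) = 0 := by
  rw [residue_apply, shift_div, coe_div_eq_coe_powerSeries (by rwa [Polynomial.taylor_coeff_zero]),
    PowerSeries.coeff_coe]
  simp

theorem residue_C_div_X (c : K) : residue 0 (C c / X) = c := by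
  rw [residue_apply, shift_zero, map_div₀, coe_X, coe_C, div_eq_mul_inv, HahnSeries.inv_single,
    inv_one, HahnSeries.C_apply, HahnSeries.single_mul_single]
  simp

theorem finite_setOf_residue_ne_zero (f : RatFunc K) : {a | residue a f ≠ 0}.Finite := by
  refine (Polynomial.finite_setOfPred_isRoot f.denom_ne_zero).subset fun a ha => ?_
  by_contra h
  exact ha (by rw [← num_div_denom f]; exact residue_div_eq_zero h)

theorem coe_map_eq_mapRingHom_coe (τ : K →+* K) (Φ : RatFunc K →+* RatFunc K)
    (hC : ∀ a, Φ (C a) = C (τ a)) (hX : Φ X = X) (f : RatFunc K) :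
    ((Φ f : RatFunc K) : K⸨X⸩) = HahnSeries.mapRingHom τ (f : K⸨X⸩) := by
  have : (algebraMap (RatFunc K) K⸨X⸩).comp Φ =
      (HahnSeries.mapRingHom τ).comp (algebraMap (RatFunc K) K⸨X⸩) := by
    refine ringHom_ext (fun a => ?_) ?_
    · ext n
      by_cases hn : n = 0 <;> simp [hC, coe_C, hn]
    · ext n
      by_cases hn : n = 1 <;> simp [hX, hn]
  exact RingHom.congr_fun this f

theorem residue_map (τ : K →+* K) (Φ : RatFunc K →+* RatFunc K)
    (hC : ∀ a, Φ (C a) = C (τ a)) (hX : Φ X = X) (a : K) (f : RatFunc K) :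
    residue (τ a) (Φ f) = τ (residue a f) := by
  have hcomm : ((shift (τ a)).toRingHom).comp Φ = Φ.comp (shift a).toRingHom :=
    ringHom_ext (fun b => by simp [hC]) (by simp [hX, hC])
  have : shift (τ a) (Φ f) = Φ (shift a f) := RingHom.congr_fun hcomm f
  rw [residue_apply, residue_apply, this, coe_map_eq_mapRingHom_coe τ Φ hC hX,
    HahnSeries.mapRingHom_apply, HahnSeries.map_coeff]

section IntResidueSum

variable [CharZero K]

theorem finite_support_residue_intCast (f : RatFunc K) :
    (Function.support fun n : ℤ => residue (n : K) f).Finite :=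
  (finite_setOf_residue_ne_zero f).preimage Int.cast_injective.injOn

noncomputable def intResidueSum : RatFunc K →+ K where
  toFun f := ∑ᶠ n : ℤ, residue (n : K) f
  map_zero' := by simp
  map_add' f g := by
    simp only [map_add]
    exact finsum_add_distrib (finite_support_residue_intCast f) (finite_support_residue_intCast g)

theorem intResidueSum_apply (f : RatFunc K) :
    intResidueSum f = ∑ᶠ n : ℤ, residue (n : K) f := rfl

theorem intResidueSum_shift_intCast (m : ℤ) (f : RatFunc K) :
    intResidueSum (shift (m : K) f) = intResidueSum f := by
  simp only [intResidueSum_apply, residue_shift, ← Int.cast_add]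
  exact finsum_comp_equiv (Equiv.addLeft m) (f := fun n : ℤ => residue (n : K) f)

theorem intResidueSum_map (τ : K →+* K) (Φ : RatFunc K →+* RatFunc K)
    (hC : ∀ a, Φ (C a) = C (τ a)) (hX : Φ X = X) (f : RatFunc K) :
    intResidueSum (Φ f) = τ (intResidueSum f) := by
  have (n : ℤ) : residue (n : K) (Φ f) = τ (residue (n : K) f) := by
    rw [← residue_map τ Φ hC hX, map_intCast]
  simp only [intResidueSum_apply, this]
  exact (τ.toAddMonoidHom.map_finsum (finite_support_residue_intCast f)).symm

theorem intResidueSum_C_div_X (c : K) : intResidueSum (C c / X) = c := by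
  rw [intResidueSum_apply, finsum_eq_single _ 0 fun n hn => ?_, Int.cast_zero, residue_C_div_X]
  rw [← algebraMap_C, ← algebraMap_X]
  exact residue_div_eq_zero (by simpa using hn)

theorem inv_X_ne_shift_one_sub (g : RatFunc K) : X⁻¹ ≠ shift 1 g - g := by
  intro h
  have := congrArg intResidueSum h
  rw [map_sub, ← Int.cast_one, intResidueSum_shift_intCast, sub_self, inv_eq_one_div,
    ← map_one C, intResidueSum_C_div_X] at this
  exact one_ne_zero this

end IntResidueSum

end RatFunc

open RatFunc in
theorem not_shift_summable_inv_xy_general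
    (F : Type*) [Field F] [CharZero F]
    (σx σy : RatFunc2 F ≃ₐ[F] RatFunc2 F)
    (hσxx : σx (RatFunc2.x F) = RatFunc2.x F + 1)
    (hσxy : σx (RatFunc2.y F) = RatFunc2.y F)
    (hσyx : σy (RatFunc2.x F) = RatFunc2.x F)
    (hσyy : σy (RatFunc2.y F) = RatFunc2.y F + 1) :
    ¬ ∃ g h : RatFunc2 F,
        1 / (RatFunc2.x F * RatFunc2.y F) = σx g - g + σy h - h := by
  rintro ⟨g, h, heq⟩
  have hσxC (f : RatFunc F) : σx (C f) = C (shift 1 f) :=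
    algHom_apply_C_eq_C_shift σx.toAlgHom (by simpa using hσxx) f
  have hσyC (f : RatFunc F) : σy (C f) = C f := by
    simpa using algHom_apply_C_eq_C_shift σy.toAlgHom (c := 0) (by simpa using hσyx) f
  have hσy : (σy : RatFunc2 F →+* RatFunc2 F) = (shift 1 : RatFunc2 F →ₐ[RatFunc F] _) :=
    ringHom_ext (fun f => by simp [hσyC]) (by simpa using hσyy)
  have hσxRes : intResidueSum (σx g) = shift 1 (intResidueSum g) :=
    intResidueSum_map (shift 1 : RatFunc F →ₐ[F] _).toRingHom σx.toRingEquiv.toRingHom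
      hσxC hσxy g
  have hσyRes : intResidueSum (σy h) = intResidueSum h := by
    rw [← RingHom.coe_coe σy, hσy, RingHom.coe_coe, ← Int.cast_one,
      intResidueSum_shift_intCast]
  have hxy : 1 / (RatFunc2.x F * RatFunc2.y F) = C (X : RatFunc F)⁻¹ / X := by
    rw [one_div, mul_inv, map_inv₀, div_eq_mul_inv]
  have key := congrArg intResidueSum heq
  rw [hxy, intResidueSum_C_div_X, map_sub, map_add, map_sub, hσxRes, hσyRes,
    add_sub_cancel_right] at key
  exact inv_X_ne_shift_one_sub _ key

/-- Let `F` be an algebraically closed field of characteristic zero and let `σ_x, σ_y`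
be the shift `F`-automorphisms of `F(x,y)` (`σ_x(x) = x+1`, `σ_x(y) = y`, `σ_y(x) = x`,
`σ_y(y) = y+1`).  Then `1/(xy)` is not `(σ_x,σ_y)`-summable in `F(x,y)`. -/
theorem not_shift_summable_inv_xy
    (F : Type*) [Field F] [IsAlgClosed F] [CharZero F]
    (σx σy : RatFunc2 F ≃ₐ[F] RatFunc2 F)
    (hσxx : σx (RatFunc2.x F) = RatFunc2.x F + 1)
    (hσxy : σx (RatFunc2.y F) = RatFunc2.y F)
    (hσyx : σy (RatFunc2.x F) = RatFunc2.x F)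
    (hσyy : σy (RatFunc2.y F) = RatFunc2.y F + 1) :
    ¬ ∃ g h : RatFunc2 F,
        1 / (RatFunc2.x F * RatFunc2.y F) = σx g - g + σy h - h :=
  not_shift_summable_inv_xy_general F σx σy hσxx hσxy hσyx hσyy
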